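/- arXiv:1506.08559 — 2 statements merged into one kernel-verified Lean document; each statement's English description precedes it below -/
import Mathlib

section
/- There exists a point x in the unit sphere of c that is not an extreme point of the closed unit ball of c and satisfies sup{x*(x) : x* ∈ ext(B_{c*}) \ D(x)} = 1, where c* is identified with ℓ₁ via the pairing f(x) = f(1)·lim_i x(i) + Σ_{i≥1} f(i+1)x(i). -/
/-!
The witness is `x = (n / (n + 1))ₙ`. Every coordinate of `x` has modulus `< 1`, so `x` is the
midpoint of two points of the ball that differ from it in one coordinate. On the dual side, the
unit vectors `e_{n+1}` of `ℓ₁` are exposed, hence extreme, points of the dual ball; they pair with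
`x` to `x n < 1`, so they lie outside `D(x)`, and these values tend to `1 = ‖x‖`, an upper bound
for the pairing of `x` with the whole dual ball.
-/

open Filter Topology Metric
open scoped ENNReal

noncomputable section

/-- The space `ℓ₁` of absolutely summable real sequences. -/
abbrev EllOne : Type := lp (fun _ : ℕ => ℝ) 1

/-- The subspace of `ℓ∞` consisting of convergent real sequences. -/
def convSeq : Subspace ℝ (lp (fun _ : ℕ => ℝ) ∞) where
  carrier := {f | ∃ l : ℝ, Tendsto (fun n => f n) atTop (𝓝 l)}
  add_mem' := by
    rintro f g ⟨a, ha⟩ ⟨b, hb⟩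
    exact ⟨a + b, by simpa [lp.coeFn_add] using ha.add hb⟩
  zero_mem' := ⟨0, by simp [lp.coeFn_zero]⟩
  smul_mem' := by
    rintro c f ⟨a, ha⟩
    exact ⟨c * a, by simpa [lp.coeFn_smul] using ha.const_mul c⟩

/-- The Banach space `c` of convergent real sequences with the sup norm,
realized as a subspace of `ℓ∞`. -/
abbrev SpaceC : Type := ↥convSeq

/-- A normed space is polyhedral if the unit ball of each of its
finite-dimensional subspaces is a polytope (the convex hull of finitely many points). -/
def IsPolyhedralSpace (X : Type*) [NormedAddCommGroup X] [NormedSpace ℝ X] : Prop :=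
  ∀ Y : Subspace ℝ X, FiniteDimensional ℝ Y →
    ∃ F : Set Y, F.Finite ∧ closedBall (0 : Y) 1 = convexHull ℝ F

/-- The set of extreme points of the closed unit ball of the dual of `X`. -/
def extBdual (X : Type*) [NormedAddCommGroup X] [NormedSpace ℝ X] :
    Set (StrongDual ℝ X) :=
  Set.extremePoints ℝ (closedBall (0 : StrongDual ℝ X) 1)

/-- `D(x) = {x* ∈ S_{X*} : x*(x) = 1}`. -/
def Dface {X : Type*} [NormedAddCommGroup X] [NormedSpace ℝ X] (x : X) :
    Set (StrongDual ℝ X) :=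
  {f | ‖f‖ = 1 ∧ f x = 1}

/-- The limit of a convergent sequence `x ∈ c`. -/
def cLim (x : SpaceC) : ℝ :=
  limUnder atTop (fun n => (x : lp (fun _ : ℕ => ℝ) ∞) n)

/-- The duality pairing identifying `ℓ₁` with the dual `c*` of `c`:
`f(x) = f(0)·lim_i x(i) + Σ_{i≥0} f(i+1)·x(i)` (indices starting from `0`). -/
def cPairing (f : EllOne) (x : SpaceC) : ℝ :=
  f 0 * cLim x + ∑' i : ℕ, f (i + 1) * (x : lp (fun _ : ℕ => ℝ) ∞) i

open scoped lp

section ExtremePoints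

variable {𝕜 E : Type*} [Field 𝕜] [LinearOrder 𝕜] [IsStrictOrderedRing 𝕜] [AddCommGroup E]
  [Module 𝕜 E]

theorem eq_zero_of_mem_extremePoints_of_add_mem_of_sub_mem {A : Set E} {x y : E}
    (hx : x ∈ A.extremePoints 𝕜) (hadd : x + y ∈ A) (hsub : x - y ∈ A) : y = 0 := by
  have hseg : x ∈ openSegment 𝕜 (x - y) (x + y) :=
    ⟨1 / 2, 1 / 2, by norm_num, by norm_num, by norm_num, by module⟩
  simpa using hx.2 hsub hadd hseg

end ExtremePoints

namespace lp

variable {ι : Type*} [DecidableEq ι]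

theorem eq_single_of_norm_le_one_of_apply_eq_one {g : ℓ¹(ι, ℝ)} {k : ι} (hg : ‖g‖ ≤ 1)
    (hgk : g k = 1) : g = lp.single 1 k 1 := by
  ext j
  rcases eq_or_ne j k with rfl | hjk
  · simp [hgk]
  · have hpair := sum_le_hasSum {j, k} (fun i _ => norm_nonneg (g i))
      (by simpa using lp.hasSum_norm (p := 1) one_pos g)
    rw [Finset.sum_pair hjk, hgk, norm_one] at hpair
    simp [Pi.single_eq_of_ne hjk, norm_le_zero_iff.mp (by linarith : ‖g j‖ ≤ 0)]

theorem single_one_mem_exposedPoints (k : ι) :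
    lp.single 1 k (1 : ℝ) ∈ (closedBall (0 : ℓ¹(ι, ℝ)) 1).exposedPoints ℝ := by
  refine ⟨by simp [lp.norm_single], lp.evalCLM ℝ _ 1 k, fun g hg => ?_⟩
  rw [mem_closedBall_zero_iff] at hg
  have hgk : g k ≤ 1 := (le_abs_self _).trans ((lp.norm_apply_le_norm one_ne_zero g k).trans hg)
  refine ⟨by simpa [lp.evalCLM] using hgk, fun h => ?_⟩
  exact eq_single_of_norm_le_one_of_apply_eq_one hg (le_antisymm hgk (by simpa [lp.evalCLM] using h))

theorem single_one_mem_extremePoints (k : ι) :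
    lp.single 1 k (1 : ℝ) ∈ (closedBall (0 : ℓ¹(ι, ℝ)) 1).extremePoints ℝ :=
  exposedPoints_subset_extremePoints (single_one_mem_exposedPoints k)

end lp

namespace SpaceC

def ofTendsto (u : ℕ → ℝ) {l : ℝ} (hu : Tendsto u atTop (𝓝 l)) : SpaceC :=
  ⟨⟨u, memℓp_infty_iff.2 (isBounded_range_of_tendsto _ hu.norm).bddAbove⟩, l, hu⟩

@[simp]
theorem ofTendsto_apply (u : ℕ → ℝ) {l : ℝ} (hu : Tendsto u atTop (𝓝 l)) (n : ℕ) :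
    (ofTendsto u hu : ℓ^∞(ℕ, ℝ)) n = u n :=
  rfl

theorem abs_apply_le_norm (x : SpaceC) (n : ℕ) : |(x : ℓ^∞(ℕ, ℝ)) n| ≤ ‖x‖ :=
  lp.norm_apply_le_norm ENNReal.top_ne_zero (x : ℓ^∞(ℕ, ℝ)) n

theorem abs_cLim_le_norm (x : SpaceC) : |cLim x| ≤ ‖x‖ :=
  le_of_tendsto (tendsto_nhds_limUnder x.2).abs (.of_forall (abs_apply_le_norm x))

theorem norm_eq_one_of_abs_apply_le_one_of_tendsto_one {x : SpaceC}
    (hx : ∀ n, |(x : ℓ^∞(ℕ, ℝ)) n| ≤ 1)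
    (hlim : Tendsto (fun n => (x : ℓ^∞(ℕ, ℝ)) n) atTop (𝓝 1)) : ‖x‖ = 1 :=
  le_antisymm (lp.norm_le_of_forall_le zero_le_one hx) <|
    le_of_tendsto hlim (Eventually.of_forall fun n => (le_abs_self _).trans (abs_apply_le_norm x n))

theorem notMem_extremePoints_of_abs_apply_lt_one {x : SpaceC} {k : ℕ}
    (hk : |(x : ℓ^∞(ℕ, ℝ)) k| < 1) : x ∉ (closedBall (0 : SpaceC) 1).extremePoints ℝ := by
  intro hx
  have hx1 : ‖x‖ ≤ 1 := mem_closedBall_zero_iff.1 hx.1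
  set δ := 1 - |(x : ℓ^∞(ℕ, ℝ)) k|
  have hδ : 0 < δ := sub_pos.2 hk
  have hsingle : (Pi.single k δ : ℕ → ℝ) =ᶠ[atTop] 0 :=
    (eventually_gt_atTop k).mono fun n hn => Pi.single_eq_of_ne hn.ne' _
  set e := ofTendsto (Pi.single k δ) (tendsto_const_nhds.congr' hsingle.symm)
  have hmem : ∀ s : ℝ, |s| ≤ 1 → x + s • e ∈ closedBall (0 : SpaceC) 1 := by
    intro s hs
    refine mem_closedBall_zero_iff.2 (lp.norm_le_of_forall_le zero_le_one fun n => ?_)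
    change |(x : ℓ^∞(ℕ, ℝ)) n + s * (Pi.single k δ : ℕ → ℝ) n| ≤ 1
    rcases eq_or_ne n k with rfl | hn
    · rw [Pi.single_eq_same]
      calc |(x : ℓ^∞(ℕ, ℝ)) n + s * δ| ≤ |(x : ℓ^∞(ℕ, ℝ)) n| + |s| * δ :=
            (abs_add_le _ _).trans_eq (by rw [abs_mul, abs_of_pos hδ])
        _ ≤ |(x : ℓ^∞(ℕ, ℝ)) n| + δ := by gcongr; exact mul_le_of_le_one_left hδ.le hs
        _ = 1 := add_sub_cancel _ _
    · simpa [Pi.single_eq_of_ne hn] using (abs_apply_le_norm x n).trans hx1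
  have he : e = 0 := eq_zero_of_mem_extremePoints_of_add_mem_of_sub_mem hx
    (by simpa using hmem 1 (by norm_num)) (by simpa [sub_eq_add_neg] using hmem (-1) (by norm_num))
  have hek := congrArg (fun y : SpaceC => (y : ℓ^∞(ℕ, ℝ)) k) he
  exact hδ.ne' (by simpa [e] using hek)

end SpaceC

theorem cPairing_single_succ (k : ℕ) (x : SpaceC) :
    cPairing (lp.single 1 (k + 1) 1) x = (x : ℓ^∞(ℕ, ℝ)) k := by
  rw [cPairing, lp.single_apply_ne _ _ _ (Nat.succ_ne_zero k).symm, zero_mul, zero_add,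
    tsum_eq_single k fun i hi => by simp [Pi.single_eq_of_ne (by omega : i + 1 ≠ k + 1)]]
  simp

theorem cPairing_le_norm_mul_norm (f : EllOne) (x : SpaceC) : cPairing f x ≤ ‖f‖ * ‖x‖ := by
  have hf : HasSum (fun i => ‖f i‖) ‖f‖ := by simpa using lp.hasSum_norm (p := 1) one_pos f
  have htail : Summable fun i => ‖f (i + 1)‖ := (summable_nat_add_iff 1).2 hf.summable
  have hterm : ∀ i, f (i + 1) * (x : ℓ^∞(ℕ, ℝ)) i ≤ ‖f (i + 1)‖ * ‖x‖ := fun i =>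
    (le_abs_self _).trans (by rw [abs_mul]; gcongr; exacts [le_rfl, SpaceC.abs_apply_le_norm x i])
  have hlim : f 0 * cLim x ≤ ‖f 0‖ * ‖x‖ :=
    (le_abs_self _).trans (by rw [abs_mul]; gcongr; exacts [le_rfl, SpaceC.abs_cLim_le_norm x])
  calc cPairing f x ≤ ‖f 0‖ * ‖x‖ + ∑' i, ‖f (i + 1)‖ * ‖x‖ := by
        refine add_le_add hlim (Summable.tsum_le_tsum hterm ?_ (htail.mul_right _))
        exact (htail.mul_right ‖x‖).of_norm_bounded fun i => by
          rw [norm_mul]; gcongr; exact SpaceC.abs_apply_le_norm x i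
    _ = ‖f‖ * ‖x‖ := by rw [tsum_mul_right, ← add_mul, ← hf.summable.tsum_eq_zero_add, hf.tsum_eq]

theorem sSup_cPairing_extremePoints_diff_eq_one {x : SpaceC} (hx : ‖x‖ ≤ 1)
    (hlt : ∀ n, (x : ℓ^∞(ℕ, ℝ)) n < 1)
    (hlim : Tendsto (fun n => (x : ℓ^∞(ℕ, ℝ)) n) atTop (𝓝 1)) :
    sSup ((fun f : EllOne => cPairing f x) ''
      (Set.extremePoints ℝ (closedBall (0 : EllOne) 1) \
        {f : EllOne | ‖f‖ = 1 ∧ cPairing f x = 1})) = 1 := by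
  set S := (fun f : EllOne => cPairing f x) ''
    (Set.extremePoints ℝ (closedBall (0 : EllOne) 1) \ {f : EllOne | ‖f‖ = 1 ∧ cPairing f x = 1})
  have hub : 1 ∈ upperBounds S := by
    rintro _ ⟨f, ⟨hf, -⟩, rfl⟩
    exact (cPairing_le_norm_mul_norm f x).trans
      (mul_le_one₀ (mem_closedBall_zero_iff.1 hf.1) (norm_nonneg x) hx)
  have hmem : ∀ n, (x : ℓ^∞(ℕ, ℝ)) n ∈ S := fun n =>
    ⟨lp.single 1 (n + 1) 1, ⟨lp.single_one_mem_extremePoints (n + 1),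
      fun h => (hlt n).ne (cPairing_single_succ n x ▸ h.2)⟩, cPairing_single_succ n x⟩
  exact (isLUB_of_mem_closure hub (mem_closure_of_tendsto hlim (.of_forall hmem))).csSup_eq
    ⟨_, hmem 0⟩

/-- There is a point `x` of the unit sphere of `c` that is not an extreme point of the
closed unit ball of `c` and satisfies `sup{x*(x) : x* ∈ ext(B_{c*}) \ D(x)} = 1`,
where `c*` is identified with `ℓ₁` via the pairing `cPairing`. -/
theorem spaceC_bad_point_exists :
    ∃ x : SpaceC, ‖x‖ = 1 ∧
      x ∉ Set.extremePoints ℝ (closedBall (0 : SpaceC) 1) ∧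
      sSup ((fun f : EllOne => cPairing f x) ''
        (Set.extremePoints ℝ (closedBall (0 : EllOne) 1) \
          {f : EllOne | ‖f‖ = 1 ∧ cPairing f x = 1})) = 1 := by
  have hlim : Tendsto (fun n : ℕ => (n : ℝ) / (n + 1)) atTop (𝓝 1) :=
    tendsto_natCast_div_add_atTop 1
  set x := SpaceC.ofTendsto _ hlim
  have hlt : ∀ n, (x : ℓ^∞(ℕ, ℝ)) n < 1 := fun n => by
    simp [x, div_lt_one (Nat.cast_add_one_pos (α := ℝ) n)]
  have habs : ∀ n, |(x : ℓ^∞(ℕ, ℝ)) n| ≤ 1 := fun n => by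
    rw [abs_of_nonneg (by simp only [x, SpaceC.ofTendsto_apply]; positivity)]; exact (hlt n).le
  have hnorm : ‖x‖ = 1 := SpaceC.norm_eq_one_of_abs_apply_le_one_of_tendsto_one habs hlim
  exact ⟨x, hnorm, SpaceC.notMem_extremePoints_of_abs_apply_lt_one (k := 0) (by simp [x]),
    sSup_cPairing_extremePoints_diff_eq_one hnorm.le hlt hlim⟩

end
end

section
/- Let X be a Lindenstrauss space satisfying property (GM): x*(x) < 1 whenever x ∈ S_X and x* lies in the weak* closure of ext(B_{X*}) \ {x*}. Then X does not contain an isometric copy of c. -/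
/-!
Let `T : c → X` be a linear isometry and `eₙ` the unit vectors of `c`. Any functional of norm
at most one taking the value `1` at `eₙ` is the `n`-th coordinate functional, because `eₙ ± w`
stays in the unit ball whenever `wₙ = 0` and `‖w‖ ≤ 1`. By Krein–Milman applied to the
weak*-compact face of `B_{X*}` where `T eₙ` is normed, there are extreme points `fₙ` of `B_{X*}`
with `fₙ ∘ T = eₙ*`. A weak* cluster point `f` of `(fₙ)` satisfies `f (T 1) = 1` and
`f (T eₘ) = 0`, so it differs from every `fₙ` and lies in the weak* closure of
`ext B_{X*} \ {f}`, contradicting (GM) at `x = T 1`.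
-/

open Filter Topology Metric
open scoped ENNReal

noncomputable section

/-- A Lindenstrauss space: a real Banach space whose dual is isometrically
isomorphic to `L¹(μ)` for some measure `μ`. -/
def IsLindenstrauss (X : Type) [NormedAddCommGroup X] [NormedSpace ℝ X] : Prop :=
  ∃ (α : Type) (_ : MeasurableSpace α) (μ : MeasureTheory.Measure α),
    Nonempty (StrongDual ℝ X ≃ₗᵢ[ℝ] MeasureTheory.Lp ℝ 1 μ)

lemma StrongDual.apply_le_of_norm_le_one {E : Type*} [SeminormedAddCommGroup E]
    [NormedSpace ℝ E] {φ : StrongDual ℝ E} (hφ : ‖φ‖ ≤ 1) (x : E) : φ x ≤ ‖x‖ :=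
  (le_abs_self _).trans ((φ.le_of_opNorm_le hφ x).trans_eq (one_mul _))

lemma StrongDual.apply_eq_zero_of_norm_add_le_of_norm_sub_le {E : Type*}
    [SeminormedAddCommGroup E] [NormedSpace ℝ E] {φ : StrongDual ℝ E} (hφ : ‖φ‖ ≤ 1)
    {u w : E} (hu : φ u = 1) (hadd : ‖u + w‖ ≤ 1) (hsub : ‖u - w‖ ≤ 1) : φ w = 0 := by
  have h₁ := (apply_le_of_norm_le_one hφ (u + w)).trans hadd
  have h₂ := (apply_le_of_norm_le_one hφ (u - w)).trans hsub
  rw [map_add, hu] at h₁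
  rw [map_sub, hu] at h₂
  linarith

lemma isExtreme_setOf_apply_eq_of_forall_apply_le {𝕜 E : Type*} [Field 𝕜] [LinearOrder 𝕜]
    [IsStrictOrderedRing 𝕜] [AddCommGroup E] [Module 𝕜 E] {A : Set E} (l : E →ₗ[𝕜] 𝕜) {c : 𝕜}
    (hA : ∀ a ∈ A, l a ≤ c) : IsExtreme 𝕜 A {a ∈ A | l a = c} := by
  refine ⟨Set.sep_subset A _, ?_⟩
  rintro x₁ hx₁ x₂ hx₂ x ⟨-, hx⟩ ⟨a, b, ha, hb, hab, rfl⟩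
  rw [map_add, map_smul, map_smul, smul_eq_mul, smul_eq_mul] at hx
  have h₂ := mul_le_mul_of_nonneg_left (hA x₂ hx₂) hb.le
  have hc : a * c + b * c = c := by rw [← add_mul, hab, one_mul]
  exact ⟨hx₁, le_antisymm (hA x₁ hx₁) (le_of_mul_le_mul_left (by linarith) ha)⟩

lemma WeakDual.apply_eq_of_mapClusterPt {𝕜 E ι : Type*} [CommSemiring 𝕜] [TopologicalSpace 𝕜]
    [ContinuousAdd 𝕜] [ContinuousConstSMul 𝕜 𝕜] [T2Space 𝕜] [AddCommMonoid E] [Module 𝕜 E]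
    [TopologicalSpace E] {l : Filter ι} {u : ι → WeakDual 𝕜 E} {F : WeakDual 𝕜 E}
    (hF : MapClusterPt F l u) {x : E} {a : 𝕜} (h : ∀ᶠ i in l, u i x = a) : F x = a :=
  (isClosed_eq (WeakDual.eval_continuous x) continuous_const).mem_of_mapClusterPt hF h

section

variable {X : Type*} [NormedAddCommGroup X] [NormedSpace ℝ X]

lemma norm_le_one_of_mem_extBdual {f : StrongDual ℝ X} (hf : f ∈ extBdual X) : ‖f‖ ≤ 1 :=
  mem_closedBall_zero_iff.1 (extremePoints_subset hf)

theorem exists_mem_extBdual_apply_eq_norm (x : X) : ∃ f ∈ extBdual X, f x = ‖x‖ := by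
  -- instance search does not see through the `WeakDual` synonym
  have : LocallyConvexSpace ℝ (WeakDual ℝ X) := WeakBilin.locallyConvexSpace
  set S : Set (StrongDual ℝ X) := {f ∈ closedBall 0 1 | f x = ‖x‖}
  have hface : IsExtreme ℝ (closedBall 0 1) S :=
    isExtreme_setOf_apply_eq_of_forall_apply_le (ContinuousLinearMap.apply ℝ ℝ x).toLinearMap
      fun f hf => StrongDual.apply_le_of_norm_le_one (mem_closedBall_zero_iff.1 hf) x
  have hcompact : IsCompact (WeakDual.toStrongDual ⁻¹' S) :=
    (WeakDual.isCompact_closedBall 0 1).inter_right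
      (isClosed_eq (WeakDual.eval_continuous x) continuous_const)
  obtain ⟨g, hg, hgx⟩ := exists_dual_vector'' ℝ x
  obtain ⟨F, hF⟩ := hcompact.extremePoints_nonempty
    ⟨StrongDual.toWeakDual g, mem_closedBall_zero_iff.2 hg, hgx⟩
  have hFS : WeakDual.toStrongDual F ∈ S.extremePoints ℝ := by
    rw [← Set.image_preimage_eq S WeakDual.toStrongDual.surjective, ← image_extremePoints]
    exact Set.mem_image_of_mem _ hF
  exact ⟨_, hface.extremePoints_subset_extremePoints hFS, (extremePoints_subset hFS).2⟩

end

namespace SpaceC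

def coord (n : ℕ) : SpaceC →L[ℝ] ℝ :=
  (lp.evalCLM ℝ (fun _ : ℕ => ℝ) ∞ n).comp convSeq.subtypeL

lemma abs_coord_le_norm (n : ℕ) (y : SpaceC) : |coord n y| ≤ ‖y‖ :=
  (Real.norm_eq_abs _).symm.trans_le <|
    lp.norm_apply_le_norm ENNReal.top_ne_zero (y : lp (fun _ : ℕ => ℝ) ∞) n

lemma norm_le_of_forall_abs_coord_le {y : SpaceC} {C : ℝ} (hC : 0 ≤ C)
    (h : ∀ n, |coord n y| ≤ C) : ‖y‖ ≤ C :=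
  lp.norm_le_of_forall_le (f := (y : lp (fun _ : ℕ => ℝ) ∞)) hC fun n =>
    (Real.norm_eq_abs _).trans_le (h n)

def one : SpaceC :=
  ⟨⟨fun _ => 1, memℓp_infty ⟨1, by rintro _ ⟨_, rfl⟩; simp⟩⟩, 1, tendsto_const_nhds⟩

def single (n : ℕ) : SpaceC :=
  ⟨lp.single (E := fun _ : ℕ => ℝ) ∞ n 1, 0, tendsto_const_nhds.congr' <| by
    filter_upwards [eventually_gt_atTop n] with k hk
    exact (lp.single_apply_ne (E := fun _ : ℕ => ℝ) ∞ n 1 hk.ne').symm⟩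

@[simp] lemma coord_one (n : ℕ) : coord n one = 1 := rfl

@[simp] lemma coord_single_self (n : ℕ) : coord n (single n) = 1 := lp.single_apply_self ∞ n _

lemma coord_single_of_ne {n k : ℕ} (h : k ≠ n) : coord k (single n) = 0 :=
  lp.single_apply_ne ∞ n _ h

lemma norm_one : ‖one‖ = 1 :=
  le_antisymm (norm_le_of_forall_abs_coord_le zero_le_one fun n => by simp)
    (by simpa using abs_coord_le_norm 0 one)

lemma norm_single (n : ℕ) : ‖single n‖ = 1 :=
  (lp.norm_single (E := fun _ : ℕ => ℝ) ENNReal.zero_lt_top n 1).trans NormOneClass.norm_one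

lemma norm_single_add_le_one {n : ℕ} {w : SpaceC} (hwn : coord n w = 0) (hw : ‖w‖ ≤ 1) :
    ‖single n + w‖ ≤ 1 := by
  refine norm_le_of_forall_abs_coord_le zero_le_one fun k => ?_
  rcases eq_or_ne k n with rfl | hk
  · simp [hwn]
  · simpa [coord_single_of_ne hk] using (abs_coord_le_norm k w).trans hw

lemma apply_eq_coord_of_apply_single {φ : StrongDual ℝ SpaceC} (hφ : ‖φ‖ ≤ 1) {n : ℕ}
    (h : φ (single n) = 1) (y : SpaceC) : φ y = coord n y := by
  have hker : ∀ w, coord n w = 0 → φ w = 0 := by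
    intro w hwn
    set t : ℝ := (1 + ‖w‖)⁻¹
    have ht : 0 < t := by positivity
    have htw : ‖t • w‖ ≤ 1 := by
      rw [norm_smul, Real.norm_of_nonneg ht.le, inv_mul_le_one₀ (by positivity)]
      linarith
    have htwn : coord n (t • w) = 0 := by simp [hwn]
    have hsub : ‖single n - t • w‖ ≤ 1 := by
      rw [sub_eq_add_neg]
      exact norm_single_add_le_one (by simp [htwn]) (by rwa [norm_neg])
    have hzero := StrongDual.apply_eq_zero_of_norm_add_le_of_norm_sub_le hφ h
      (norm_single_add_le_one htwn htw) hsub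
    rw [map_smul, smul_eq_mul] at hzero
    exact (mul_eq_zero.1 hzero).resolve_left ht.ne'
  have := hker (y - coord n y • single n) (by simp)
  rwa [map_sub, map_smul, h, smul_eq_mul, mul_one, sub_eq_zero] at this

end SpaceC

theorem exists_seq_extBdual_apply_eq_coord {X : Type*} [NormedAddCommGroup X] [NormedSpace ℝ X]
    (T : SpaceC →ₗᵢ[ℝ] X) :
    ∃ f : ℕ → StrongDual ℝ X, (∀ n, f n ∈ extBdual X) ∧ ∀ n y, f n (T y) = SpaceC.coord n y := by
  choose f hf_ext hf_apply using fun n => exists_mem_extBdual_apply_eq_norm (T (SpaceC.single n))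
  refine ⟨f, hf_ext, fun n =>
    SpaceC.apply_eq_coord_of_apply_single (φ := (f n).comp T.toContinuousLinearMap) ?_ ?_⟩
  · exact ((f n).opNorm_comp_le _).trans (mul_le_one₀ (norm_le_one_of_mem_extBdual (hf_ext n))
      (norm_nonneg T.toContinuousLinearMap) T.norm_toContinuousLinearMap_le)
  · exact (hf_apply n).trans (by rw [T.norm_map, SpaceC.norm_single])

theorem lindenstrauss_gm_no_isometric_c_general
    {X : Type} [NormedAddCommGroup X] [NormedSpace ℝ X]
    (hgm : ∀ x : X, ‖x‖ = 1 → ∀ f : StrongDual ℝ X,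
      StrongDual.toWeakDual f ∈
        closure (StrongDual.toWeakDual '' (extBdual X \ {f})) → f x < 1) :
    ¬ Nonempty (SpaceC →ₗᵢ[ℝ] X) := by
  rintro ⟨T⟩
  obtain ⟨f, hf_ext, hf_coord⟩ := exists_seq_extBdual_apply_eq_coord T
  obtain ⟨F, -, hF⟩ := (WeakDual.isCompact_closedBall (0 : StrongDual ℝ X) 1).exists_mapClusterPt
    (f := atTop) (u := fun n => StrongDual.toWeakDual (f n))
    (tendsto_principal.2 (.of_forall fun n => extremePoints_subset (hf_ext n)))
  have hF_one : F (T SpaceC.one) = 1 :=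
    WeakDual.apply_eq_of_mapClusterPt hF (.of_forall fun n => by simp [hf_coord])
  have hF_single (m : ℕ) : F (T (SpaceC.single m)) = 0 :=
    WeakDual.apply_eq_of_mapClusterPt hF ((eventually_gt_atTop m).mono fun n hn => by
      simp [hf_coord, SpaceC.coord_single_of_ne hn.ne'])
  have hf_ne (n : ℕ) : f n ≠ WeakDual.toStrongDual F := fun h => by
    simpa [hf_coord, hF_single] using congr_arg (· (T (SpaceC.single n))) h
  have hone : ‖T SpaceC.one‖ = 1 := by rw [T.norm_map, SpaceC.norm_one]
  refine (hgm (T SpaceC.one) hone (WeakDual.toStrongDual F) ?_).ne hF_one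
  exact isClosed_closure.mem_of_mapClusterPt hF
    (.of_forall fun n => subset_closure ⟨f n, ⟨hf_ext n, hf_ne n⟩, rfl⟩)

/-- A Lindenstrauss space with property (GM) contains no isometric copy of `c`. -/
theorem lindenstrauss_gm_no_isometric_c
    {X : Type} [NormedAddCommGroup X] [NormedSpace ℝ X] [CompleteSpace X]
    (hL : IsLindenstrauss X)
    (hgm : ∀ x : X, ‖x‖ = 1 → ∀ f : StrongDual ℝ X,
      StrongDual.toWeakDual f ∈
        closure (StrongDual.toWeakDual '' (extBdual X \ {f})) → f x < 1) :
    ¬ Nonempty (SpaceC →ₗᵢ[ℝ] X) :=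
  lindenstrauss_gm_no_isometric_c_general hgm

end
end
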